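/- arXiv:0812.0870 — 3 statements merged into one kernel-verified Lean document; each statement's English description precedes it below -/
import Mathlib

section
/- The simple graph G on vertex set {1,2,3,4,5,6,7} with edge set {{1,2},{1,3},{1,5},{1,6},{1,7},{2,3},{2,4},{3,4},{4,5},{4,6},{4,7}} (graph number 801 in the Atlas of Graphs) has minimum rank 3 over the real numbers. -/
/-- Edge list of graph number 801 in the Atlas of Graphs (vertices 1..7). -/
def atlas801Edges : List (ℕ × ℕ) := [(1,2),(1,3),(1,5),(1,6),(1,7),(2,3),(2,4),(3,4),(4,5),(4,6),(4,7)]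

/-!
Lower bound: rows 2, 1, 5 and columns 3, 1, 6 of a matrix with the pattern of the graph meet in a
3×3 submatrix whose entries at (2,6), (5,3), (5,6) vanish, so its determinant is the single
product −a₂₃a₁₆a₅₁ ≠ 0. (Vertex v is the index v − 1 : Fin 7.)

Upper bound: represent the vertices by vectors in ℝ³ and take their Gram matrix for the form
x₀y₀ + x₁y₁ − x₂y₂. Vertices 5, 6, 7 all get the isotropic vector (1,0,1), orthogonal to the
vectors of 2 and 3 but not to those of 1 and 4.
-/

open Matrix

namespace Matrix

variable {m n k R : Type*}

theorem card_le_rank_of_det_submatrix_ne_zero [Fintype n] [Fintype k] [DecidableEq k] [Field R]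
    (A : Matrix m n R) (r : k → m) (c : k → n) (h : (A.submatrix r c).det ≠ 0) :
    Fintype.card k ≤ A.rank := by
  rw [← rank_of_isUnit _ ((isUnit_iff_isUnit_det _).mpr h.isUnit)]
  exact rank_submatrix_le A r c

theorem isSymm_mul_mul_transpose [Fintype n] [CommSemiring R] {D : Matrix n n R} (hD : D.IsSymm)
    (U : Matrix m n R) : (U * D * Uᵀ).IsSymm := by
  simp only [IsSymm, transpose_mul, transpose_transpose, hD.eq, Matrix.mul_assoc]

end Matrix

def HasAtlas801Pattern {R : Type*} [Zero R] (A : Matrix (Fin 7) (Fin 7) R) : Prop :=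
  ∀ i j : Fin 7, i ≠ j →
    (A i j ≠ 0 ↔ ((i.val + 1, j.val + 1) ∈ atlas801Edges ∨ (j.val + 1, i.val + 1) ∈ atlas801Edges))

theorem HasAtlas801Pattern.three_le_rank {R : Type*} [Field R] {A : Matrix (Fin 7) (Fin 7) R}
    (hA : HasAtlas801Pattern A) : 3 ≤ A.rank := by
  have h₁₂ : A 1 2 ≠ 0 := (hA 1 2 (by decide)).mpr (by decide)
  have h₀₅ : A 0 5 ≠ 0 := (hA 0 5 (by decide)).mpr (by decide)
  have h₄₀ : A 4 0 ≠ 0 := (hA 4 0 (by decide)).mpr (by decide)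
  have h₁₅ : A 1 5 = 0 := (hA 1 5 (by decide)).not_right.mpr (by decide)
  have h₄₂ : A 4 2 = 0 := (hA 4 2 (by decide)).not_right.mpr (by decide)
  have h₄₅ : A 4 5 = 0 := (hA 4 5 (by decide)).not_right.mpr (by decide)
  have hdet : (A.submatrix ![1, 0, 4] ![2, 0, 5]).det = -(A 1 2 * A 0 5 * A 4 0) := by
    rw [det_fin_three]
    simp [h₁₅, h₄₂, h₄₅]
  have hdet_ne : (A.submatrix ![1, 0, 4] ![2, 0, 5]).det ≠ 0 := by
    rw [hdet]
    exact neg_ne_zero.mpr (mul_ne_zero (mul_ne_zero h₁₂ h₀₅) h₄₀)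
  simpa using A.card_le_rank_of_det_submatrix_ne_zero _ _ hdet_ne

def atlas801Vectors : Matrix (Fin 7) (Fin 3) ℝ :=
  !![1, 0, 0; 1, 1, 1; 1, -1, 1; 0, 2, 1; 1, 0, 1; 1, 0, 1; 1, 0, 1]

def lorentzForm : Matrix (Fin 3) (Fin 3) ℝ := diagonal ![1, 1, -1]

def atlas801Witness : Matrix (Fin 7) (Fin 7) ℝ :=
  atlas801Vectors * lorentzForm * atlas801Vectorsᵀ

theorem atlas801Witness_isSymm : atlas801Witness.IsSymm :=
  isSymm_mul_mul_transpose (isSymm_diagonal _) _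

theorem atlas801Witness_apply (i j : Fin 7) :
    atlas801Witness i j = atlas801Vectors i 0 * atlas801Vectors j 0 +
      atlas801Vectors i 1 * atlas801Vectors j 1 - atlas801Vectors i 2 * atlas801Vectors j 2 := by
  simp [atlas801Witness, lorentzForm, mul_apply, Fin.sum_univ_three, sub_eq_add_neg]

theorem hasAtlas801Pattern_atlas801Witness : HasAtlas801Pattern atlas801Witness := by
  intro i j
  rw [atlas801Witness_apply]
  fin_cases i <;> fin_cases j <;> norm_num [atlas801Vectors, atlas801Edges, cons_val_two]

theorem atlas801Witness_rank_le : atlas801Witness.rank ≤ 3 :=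
  calc atlas801Witness.rank ≤ (atlas801Vectors * lorentzForm).rank :=
        rank_mul_le_left _ _
    _ ≤ Fintype.card (Fin 3) := rank_le_card_width _
    _ = 3 := Fintype.card_fin 3

/-- Graph number 801 in the Atlas of Graphs has minimum rank 3 over the reals:
3 is the least element of the set of ranks of real symmetric 7×7 matrices whose
off-diagonal zero/nonzero pattern matches the edges of the graph. -/
theorem atlas801_minRank_eq_three :
    IsLeast {r : ℕ | ∃ A : Matrix (Fin 7) (Fin 7) ℝ, A.IsSymm ∧
        (∀ i j : Fin 7, i ≠ j →
          (A i j ≠ 0 ↔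
            ((i.val + 1, j.val + 1) ∈ atlas801Edges ∨
             (j.val + 1, i.val + 1) ∈ atlas801Edges))) ∧
        A.rank = r} 3 := by
  refine ⟨⟨atlas801Witness, atlas801Witness_isSymm, hasAtlas801Pattern_atlas801Witness,
    atlas801Witness_rank_le.antisymm hasAtlas801Pattern_atlas801Witness.three_le_rank⟩, ?_⟩
  rintro r ⟨A, -, hA, rfl⟩
  exact HasAtlas801Pattern.three_le_rank hA
end

section
/- The simple graph G on vertex set {1,2,3,4,5,6,7} with edge set {{1,2},{1,3},{1,7},{2,4},{2,6},{2,7},{3,4},{3,5},{3,7},{4,5},{5,6}} (graph number 863 in the Atlas of Graphs) has minimum rank 3 over the real numbers. -/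
/-!
The lower bound needs no computation: in any matrix with this pattern, the 3×3 submatrix on rows
2, 4, 5 and columns 1, 2, 4 is upper triangular, with the edge entries `a₂₁, a₄₂, a₅₄` on its
diagonal and the non-edge entries `a₄₁, a₅₁, a₅₂` below it, so it is invertible. The upper bound
is the Gram matrix `F Fᵀ` of seven integer vectors in `ℤ³`, chosen so that `F Fᵀ` has the pattern.
-/

open Matrix

/-- Edge list of graph number 863 in the Atlas of Graphs (vertices 1..7). -/
def atlas863Edges : List (ℕ × ℕ) := [(1,2),(1,3),(1,7),(2,4),(2,6),(2,7),(3,4),(3,5),(3,7),(4,5),(5,6)]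

/-- Vertices are `Fin 7`, with `i` standing for vertex `i + 1` of the atlas. -/
def HasAtlas863Pattern {R : Type*} [Zero R] (A : Matrix (Fin 7) (Fin 7) R) : Prop :=
  ∀ i j : Fin 7, i ≠ j →
    (A i j ≠ 0 ↔
      ((i.val + 1, j.val + 1) ∈ atlas863Edges ∨ (j.val + 1, i.val + 1) ∈ atlas863Edges))

theorem Matrix.card_le_rank_of_det_submatrix_ne_zero_s6 {m n k K : Type*} [Fintype n] [Fintype k]
    [DecidableEq k] [Field K] (A : Matrix m n K) (r : k → m) (c : k → n)
    (h : (A.submatrix r c).det ≠ 0) : Fintype.card k ≤ A.rank := by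
  calc Fintype.card k = (A.submatrix r c).rank := by
        rw [rank_of_isUnit _ ((isUnit_iff_isUnit_det _).mpr h.isUnit), Fintype.card]
    _ ≤ A.rank := rank_submatrix_le A r c

theorem three_le_rank_of_hasAtlas863Pattern {K : Type*} [Field K] {A : Matrix (Fin 7) (Fin 7) K}
    (hA : HasAtlas863Pattern A) : 3 ≤ A.rank := by
  have edge {i j : Fin 7} (hij : i ≠ j)
      (he : (i.val + 1, j.val + 1) ∈ atlas863Edges ∨ (j.val + 1, i.val + 1) ∈ atlas863Edges) :
      A i j ≠ 0 :=
    (hA i j hij).mpr he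
  have nonEdge {i j : Fin 7} (hij : i ≠ j)
      (he : ¬((i.val + 1, j.val + 1) ∈ atlas863Edges ∨ (j.val + 1, i.val + 1) ∈ atlas863Edges)) :
      A i j = 0 :=
    not_not.mp (mt (hA i j hij).mp he)
  have hdet : (A.submatrix ![1, 3, 4] ![0, 1, 3]).det = A 1 0 * A 3 1 * A 4 3 := by
    rw [det_fin_three]
    simp only [submatrix_apply, cons_val_zero, cons_val_one, cons_val_two, head_cons, tail_cons,
      nonEdge (i := 3) (j := 0) (by decide) (by decide),
      nonEdge (i := 4) (j := 0) (by decide) (by decide),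
      nonEdge (i := 4) (j := 1) (by decide) (by decide)]
    ring
  refine card_le_rank_of_det_submatrix_ne_zero_s6 A ![1, 3, 4] ![0, 1, 3] ?_
  rw [hdet]
  exact mul_ne_zero (mul_ne_zero (edge (by decide) (by decide)) (edge (by decide) (by decide)))
    (edge (by decide) (by decide))

def atlas863Factor : Matrix (Fin 7) (Fin 3) ℤ :=
  !![-1, -1, -1; -1, -1, 0; -1, 1, -1; -1, 2, -1; -1, 1, 0; -1, 0, 1; -1, -1, -1]

theorem hasAtlas863Pattern_factor_mul_transpose :
    HasAtlas863Pattern (atlas863Factor * atlas863Factorᵀ) := by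
  unfold HasAtlas863Pattern
  decide

theorem hasAtlas863Pattern_map_intCast {R : Type*} [AddGroupWithOne R] [CharZero R]
    {A : Matrix (Fin 7) (Fin 7) ℤ} (hA : HasAtlas863Pattern A) :
    HasAtlas863Pattern (A.map ((↑) : ℤ → R)) := by
  intro i j hij
  simpa only [map_apply, ne_eq, Int.cast_eq_zero] using hA i j hij

/-- Graph number 863 in the Atlas of Graphs has minimum rank 3 over the reals:
3 is the least element of the set of ranks of real symmetric 7×7 matrices whose
off-diagonal zero/nonzero pattern matches the edges of the graph. -/
theorem atlas863_minRank_eq_three :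
    IsLeast {r : ℕ | ∃ A : Matrix (Fin 7) (Fin 7) ℝ, A.IsSymm ∧
        (∀ i j : Fin 7, i ≠ j →
          (A i j ≠ 0 ↔
            ((i.val + 1, j.val + 1) ∈ atlas863Edges ∨
             (j.val + 1, i.val + 1) ∈ atlas863Edges))) ∧
        A.rank = r} 3 := by
  refine ⟨?_, fun r ⟨A, _, hA, hr⟩ => hr ▸ three_le_rank_of_hasAtlas863Pattern hA⟩
  set F : Matrix (Fin 7) (Fin 3) ℝ := atlas863Factor.map (↑)
  have hF : F * Fᵀ = (atlas863Factor * atlas863Factorᵀ).map (↑) :=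
    (Matrix.map_mul (f := Int.castRingHom ℝ)).symm
  have hpat : HasAtlas863Pattern (F * Fᵀ) :=
    hF ▸ hasAtlas863Pattern_map_intCast hasAtlas863Pattern_factor_mul_transpose
  have hrank : (F * Fᵀ).rank ≤ 3 :=
    (rank_mul_le_left F Fᵀ).trans (rank_le_width F)
  exact ⟨F * Fᵀ, transpose_mul F Fᵀ, hpat,
    hrank.antisymm (three_le_rank_of_hasAtlas863Pattern hpat)⟩
end

section
/- The simple graph G on vertex set {1,2,3,4,5,6,7} with edge set {{1,2},{1,3},{2,3},{2,4},{2,5},{2,7},{3,4},{3,5},{3,7},{4,5},{4,6},{5,6}} (graph number 918 in the Atlas of Graphs) has minimum rank 3 over the real numbers. -/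
/-- Edge list of graph number 918 in the Atlas of Graphs (vertices 1..7). -/
def atlas918Edges : List (ℕ × ℕ) := [(1,2),(1,3),(2,3),(2,4),(2,5),(2,7),(3,4),(3,5),(3,7),(4,5),(4,6),(5,6)]

/-! The upper bound is witnessed by `V * diagonal ![1, 1, -1] * Vᵀ` for a suitable 7 × 3 matrix
`V`: such a product is symmetric of rank at most 3. For the lower bound, the zero/nonzero
pattern alone makes the 3 × 3 submatrix on rows 2, 6, 1 and columns 7, 4, 2 upper triangular
with nonzero diagonal: its diagonal entries sit on the edges 27, 64, 12 and the entries below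
the diagonal on the non-edges 67, 17, 14. -/

namespace Matrix

variable {m n k R : Type*}

theorem card_le_rank_of_isUpperTriangular_submatrix [Fintype n] [Fintype k] [LinearOrder k]
    [CommRing R] [IsDomain R] (A : Matrix m n R) (r : k → m) (c : k → n)
    (hU : (A.submatrix r c).IsUpperTriangular) (hd : ∀ i, A (r i) (c i) ≠ 0) :
    Fintype.card k ≤ A.rank := by
  classical
  have hdet : (A.submatrix r c).det ≠ 0 := by
    simpa [det_of_isUpperTriangular hU, Finset.prod_ne_zero_iff] using hd
  calc Fintype.card k = (A.submatrix r c).rank :=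
        (rank_of_det_mem_nonZeroDivisors (mem_nonZeroDivisors_of_ne_zero hdet)).symm
    _ ≤ A.rank := rank_submatrix_le A r c

theorem IsSymm.mul_mul_transpose [Fintype n] [CommSemiring R] {D : Matrix n n R} (hD : D.IsSymm)
    (V : Matrix m n R) : (V * D * Vᵀ).IsSymm := by
  rw [IsSymm, transpose_mul, transpose_mul, transpose_transpose, hD.eq, Matrix.mul_assoc]

/-- The entries of `E` are pairs of vertices numbered from 1, while `Fin N` counts from 0. -/
def HasPattern {N : ℕ} [Zero R] (E : List (ℕ × ℕ)) (A : Matrix (Fin N) (Fin N) R) : Prop :=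
  ∀ i j : Fin N, i ≠ j →
    (A i j ≠ 0 ↔ ((i.val + 1, j.val + 1) ∈ E ∨ (j.val + 1, i.val + 1) ∈ E))

namespace HasPattern

variable {N : ℕ} [Zero R] {E : List (ℕ × ℕ)} {A : Matrix (Fin N) (Fin N) R} {i j : Fin N}

theorem apply_ne_zero (hA : A.HasPattern E) (hij : i ≠ j)
    (he : (i.val + 1, j.val + 1) ∈ E ∨ (j.val + 1, i.val + 1) ∈ E) : A i j ≠ 0 :=
  (hA i j hij).2 he

theorem apply_eq_zero (hA : A.HasPattern E) (hij : i ≠ j)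
    (he : (i.val + 1, j.val + 1) ∉ E ∧ (j.val + 1, i.val + 1) ∉ E) : A i j = 0 :=
  not_not.1 fun h => not_or.2 he ((hA i j hij).1 h)

end HasPattern

end Matrix

open Matrix

theorem atlas918_three_le_rank {A : Matrix (Fin 7) (Fin 7) ℝ} (hA : A.HasPattern atlas918Edges) :
    3 ≤ A.rank := by
  refine card_le_rank_of_isUpperTriangular_submatrix (k := Fin 3) A ![1, 5, 0] ![6, 3, 1] ?_ ?_
  · intro i j hji
    fin_cases i <;> fin_cases j <;> first
      | exact absurd hji (by decide)
      | exact hA.apply_eq_zero (by decide) (by decide)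
  · intro i
    fin_cases i <;> exact hA.apply_ne_zero (by decide) (by decide)

def atlas918Witness : Matrix (Fin 7) (Fin 7) ℝ :=
  !![0, 2, 1, 0, 0, 0, 0;
     2, 0, 1, 2, 2, 0, 2;
     1, 1, 1, 1, 1, 0, 1;
     0, 2, 1, 1, 1, 1, 0;
     0, 2, 1, 1, 1, 1, 0;
     0, 0, 0, 1, 1, 1, 0;
     0, 2, 1, 0, 0, 0, 0]

def atlas918Factor : Matrix (Fin 7) (Fin 3) ℝ :=
  !![1, 0, 1; 1, 0, -1; 1, 0, 0; 1, 1, 1; 1, 1, 1; 0, 1, 0; 1, 0, 1]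

theorem atlas918Witness_eq :
    atlas918Witness = atlas918Factor * diagonal ![(1 : ℝ), 1, -1] * atlas918Factorᵀ := by
  ext i j
  fin_cases i <;> fin_cases j <;>
    simp [atlas918Witness, atlas918Factor, mul_apply, vecMul_diagonal, Fin.sum_univ_three] <;>
    norm_num

theorem atlas918Witness_isSymm : atlas918Witness.IsSymm := by
  rw [atlas918Witness_eq]
  exact (isSymm_diagonal _).mul_mul_transpose _

theorem atlas918Witness_rank_le : atlas918Witness.rank ≤ 3 := by
  rw [atlas918Witness_eq]
  exact (rank_mul_le_right _ _).trans (rank_le_card_height _)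

theorem atlas918Witness_hasPattern : atlas918Witness.HasPattern atlas918Edges := by
  intro i j hij
  fin_cases i <;> fin_cases j <;> first
    | exact absurd rfl hij
    | exact iff_of_true (by norm_num [atlas918Witness]) (by decide)
    | exact iff_of_false (by norm_num [atlas918Witness]) (by decide)

/-- Graph number 918 in the Atlas of Graphs has minimum rank 3 over the reals:
3 is the least element of the set of ranks of real symmetric 7×7 matrices whose
off-diagonal zero/nonzero pattern matches the edges of the graph. -/
theorem atlas918_minRank_eq_three :
    IsLeast {r : ℕ | ∃ A : Matrix (Fin 7) (Fin 7) ℝ, A.IsSymm ∧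
        (∀ i j : Fin 7, i ≠ j →
          (A i j ≠ 0 ↔
            ((i.val + 1, j.val + 1) ∈ atlas918Edges ∨
             (j.val + 1, i.val + 1) ∈ atlas918Edges))) ∧
        A.rank = r} 3 := by
  refine ⟨⟨atlas918Witness, atlas918Witness_isSymm, atlas918Witness_hasPattern, ?_⟩, ?_⟩
  · exact atlas918Witness_rank_le.antisymm (atlas918_three_le_rank atlas918Witness_hasPattern)
  · rintro r ⟨A, -, hA, rfl⟩
    exact atlas918_three_le_rank hA
end
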